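/- For invertible positive definite matrices A, B ∈ M_n(ℂ) and any unitarily invariant norm ‖·‖, one has ‖(A+B)^{-1}‖^{-1} ≥ ‖A^{-1}‖^{-1} + ‖B^{-1}‖^{-1}. -/

import Mathlib

/-!
For `s + t = 1` one has
`s² a⁻¹ + t² b⁻¹ - (a + b)⁻¹ = g a g + h b h` with `g = s a⁻¹ - (a + b)⁻¹`,
`h = t b⁻¹ - (a + b)⁻¹`, so `(a + b)⁻¹ ≤ s² a⁻¹ + t² b⁻¹`. A unitarily invariant
seminorm `N` is monotone on positive elements: if `0 ≤ x ≤ y` with `y` invertible, then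
`x = p y p` for the contraction `p = y^{-1/2} (y^{1/2} x y^{1/2})^{1/2} y^{-1/2}`, and a
selfadjoint contraction is the average of a unitary and its adjoint, whence `N x ≤ N y`.
With `α = N a⁻¹`, `β = N b⁻¹`, `s = β / (α + β)` and `t = α / (α + β)` this gives
`N (a + b)⁻¹ ≤ s² α + t² β = (α⁻¹ + β⁻¹)⁻¹`.
-/

open scoped ComplexOrder Ring

theorem Seminorm.map_real_smul {E : Type*} [AddCommGroup E] [Module ℂ E] (N : Seminorm ℂ E)
    (r : ℝ) (x : E) : N (r • x) = |r| * N x := by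
  rw [← Complex.coe_smul, map_smul_eq_mul, Complex.norm_real, Real.norm_eq_abs]

section CStarAlgebra

variable {A : Type*} [CStarAlgebra A] [PartialOrder A] [StarOrderedRing A]

theorem ringInverse_add_le_sq_smul_add_sq_smul {a b : A} (ha : IsStrictlyPositive a)
    (hb : IsStrictlyPositive b) {s t : ℝ} (hst : s + t = 1) :
    (a + b)⁻¹ʳ ≤ s ^ 2 • a⁻¹ʳ + t ^ 2 • b⁻¹ʳ := by
  set c := a + b
  have hc : IsStrictlyPositive c := ha.add_nonneg hb.nonneg
  have conj_eq {x : A} (hx : IsUnit x) (r : ℝ) :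
      (r • x⁻¹ʳ - c⁻¹ʳ) * x * (r • x⁻¹ʳ - c⁻¹ʳ)
        = r ^ 2 • x⁻¹ʳ - (2 * r) • c⁻¹ʳ + c⁻¹ʳ * x * c⁻¹ʳ := by
    simp only [sub_mul, mul_sub, smul_mul_assoc, mul_smul_comm, mul_assoc,
      Ring.inverse_mul_cancel_left _ _ hx, Ring.mul_inverse_cancel _ hx, mul_one]
    module
  have hcc : c⁻¹ʳ * a * c⁻¹ʳ + c⁻¹ʳ * b * c⁻¹ʳ = c⁻¹ʳ := by
    rw [← add_mul, ← mul_add, Ring.inverse_mul_cancel _ hc.isUnit, one_mul]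
  have key : s ^ 2 • a⁻¹ʳ + t ^ 2 • b⁻¹ʳ - c⁻¹ʳ
      = (s • a⁻¹ʳ - c⁻¹ʳ) * a * (s • a⁻¹ʳ - c⁻¹ʳ)
        + (t • b⁻¹ʳ - c⁻¹ʳ) * b * (t • b⁻¹ʳ - c⁻¹ʳ) := by
    rw [conj_eq ha.isUnit, conj_eq hb.isUnit, ← sub_eq_zero]
    calc _ = (2 * (s + t) - 2) • c⁻¹ʳ + (c⁻¹ʳ - (c⁻¹ʳ * a * c⁻¹ʳ + c⁻¹ʳ * b * c⁻¹ʳ)) := by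
          module
      _ = 0 := by rw [hst, hcc]; simp
  have hsa {x : A} (hx : IsStrictlyPositive x) (r : ℝ) : IsSelfAdjoint (r • x⁻¹ʳ - c⁻¹ʳ) :=
    ((IsSelfAdjoint.all r).smul hx.ringInverse.nonneg.isSelfAdjoint).sub
      hc.ringInverse.nonneg.isSelfAdjoint
  rw [← sub_nonneg, key]
  exact add_nonneg ((hsa ha s).conjugate_nonneg ha.nonneg) ((hsa hb t).conjugate_nonneg hb.nonneg)

open CFC in
theorem exists_nonneg_le_one_mul_mul_eq {x y : A} (hx : 0 ≤ x) (hxy : x ≤ y)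
    (hy : IsStrictlyPositive y) : ∃ p : A, 0 ≤ p ∧ p ≤ 1 ∧ p * y * p = x := by
  set s := sqrt (conjSqrt y x)
  have hyy : sqrt (conjSqrt y y) = y := by
    refine sqrt_unique ?_ hy.nonneg
    rw [conjSqrt_apply]
    set r := sqrt y
    have hrr : r * r = y := sqrt_mul_sqrt_self y hy.nonneg
    rw [← hrr]
    simp only [mul_assoc]
  refine ⟨conjSqrt y⁻¹ʳ s, ?_, ?_, ?_⟩
  · simpa using conjSqrt_le_conjSqrt (c := y⁻¹ʳ) (sqrt_nonneg (conjSqrt y x))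
  · calc conjSqrt y⁻¹ʳ s ≤ conjSqrt y⁻¹ʳ y :=
          conjSqrt_le_conjSqrt (hyy ▸ sqrt_le_sqrt _ _ (conjSqrt_le_conjSqrt hxy))
      _ = 1 := conjSqrt_ringInverse_self y
  · have h1 : sqrt y⁻¹ʳ * y * sqrt y⁻¹ʳ = 1 := conjSqrt_ringInverse_self y
    calc conjSqrt y⁻¹ʳ s * y * conjSqrt y⁻¹ʳ s
        = sqrt y⁻¹ʳ * s * (sqrt y⁻¹ʳ * y * sqrt y⁻¹ʳ) * s * sqrt y⁻¹ʳ := by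
          simp only [conjSqrt_apply, mul_assoc]
      _ = conjSqrt y⁻¹ʳ (conjSqrt y x) := by
          rw [h1, mul_one, mul_assoc _ s s, sqrt_mul_sqrt_self _ ?_]
          · rfl
          · simpa using conjSqrt_le_conjSqrt (c := y) hx
      _ = x := conjSqrt_ringInverse_conjSqrt y x

namespace Seminorm

def IsUnitarilyInvariant (N : Seminorm ℂ A) : Prop :=
  ∀ x, ∀ u ∈ unitary A, ∀ v ∈ unitary A, N (u * x * v) = N x

variable {N : Seminorm ℂ A}

theorem IsUnitarilyInvariant.map_mul_mul_le (hN : N.IsUnitarilyInvariant) {p : A}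
    (hp : IsSelfAdjoint p) (hp₁ : ‖p‖ ≤ 1) (y : A) : N (p * y * p) ≤ N y := by
  obtain ⟨u, hu, hpu⟩ : ∃ u ∈ unitary A, (2⁻¹ : ℂ) • (u + star u) = p := by
    refine ⟨_, (selfAdjoint.unitarySelfAddISMul ⟨p, hp⟩ hp₁).2, ?_⟩
    rw [← Complex.ofReal_ofNat, ← Complex.ofReal_inv, Complex.coe_smul, ← realPart_apply_coe]
    exact congrArg Subtype.val (selfAdjoint.realPart_unitarySelfAddISMul _ _)
  have hu' : star u ∈ unitary A := Unitary.star_mem hu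
  have hpyp : p * y * p = (4⁻¹ : ℂ) •
      ((u * y * u + u * y * star u) + (star u * y * u + star u * y * star u)) := by
    rw [← hpu]
    simp only [smul_mul_assoc, mul_smul_comm, smul_smul, add_mul, mul_add, smul_add]
    module
  calc N (p * y * p) ≤ 4⁻¹ * ((N (u * y * u) + N (u * y * star u))
        + (N (star u * y * u) + N (star u * y * star u))) := by
        rw [hpyp, map_smul_eq_mul]
        norm_num
        exact (map_add_le_add N _ _).trans
          (add_le_add (map_add_le_add N _ _) (map_add_le_add N _ _))
    _ = N y := by
        rw [hN y _ hu _ hu, hN y _ hu _ hu', hN y _ hu' _ hu, hN y _ hu' _ hu']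
        ring

theorem IsUnitarilyInvariant.map_le_map (hN : N.IsUnitarilyInvariant) {x y : A} (hx : 0 ≤ x)
    (hxy : x ≤ y) (hy : IsStrictlyPositive y) : N x ≤ N y := by
  obtain ⟨p, hp₀, hp₁, rfl⟩ := exists_nonneg_le_one_mul_mul_eq hx hxy hy
  exact hN.map_mul_mul_le hp₀.isSelfAdjoint
    ((CStarAlgebra.norm_le_one_iff_of_nonneg p hp₀).mpr hp₁) y

theorem IsUnitarilyInvariant.inv_add_inv_le_inv_map_ringInverse_add
    (hN : N.IsUnitarilyInvariant) (hN₀ : ∀ x, N x = 0 → x = 0) {a b : A}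
    (ha : IsStrictlyPositive a) (hb : IsStrictlyPositive b) :
    (N a⁻¹ʳ)⁻¹ + (N b⁻¹ʳ)⁻¹ ≤ (N (a + b)⁻¹ʳ)⁻¹ := by
  rcases subsingleton_or_nontrivial A with _ | _
  · simp [Subsingleton.elim _ (0 : A)]
  have pos {x : A} (hx : IsStrictlyPositive x) : 0 < N x :=
    (apply_nonneg N x).lt_of_ne' fun h => hx.isUnit.ne_zero (hN₀ x h)
  have hab : IsStrictlyPositive (a + b)⁻¹ʳ := (ha.add_nonneg hb.nonneg).ringInverse
  set α := N a⁻¹ʳ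
  set β := N b⁻¹ʳ
  have hα : 0 < α := pos ha.ringInverse
  have hβ : 0 < β := pos hb.ringInverse
  set s := β / (α + β)
  set t := α / (α + β)
  have hinv_le := ringInverse_add_le_sq_smul_add_sq_smul ha hb (s := s) (t := t)
    (by rw [← add_div, add_comm, div_self (by positivity)])
  have hnorm : N (a + b)⁻¹ʳ ≤ (α⁻¹ + β⁻¹)⁻¹ :=
    calc N (a + b)⁻¹ʳ ≤ N (s ^ 2 • a⁻¹ʳ + t ^ 2 • b⁻¹ʳ) :=
          hN.map_le_map hab.nonneg hinv_le (hab.of_le hinv_le)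
      _ ≤ s ^ 2 * α + t ^ 2 * β := by
          refine (map_add_le_add N _ _).trans_eq ?_
          rw [map_real_smul, map_real_smul, abs_sq, abs_sq]
      _ = (α⁻¹ + β⁻¹)⁻¹ := by
          simp only [s, t]
          field_simp
          ring
  rwa [le_inv_comm₀ (by positivity) (pos hab)]

end Seminorm

end CStarAlgebra

/-- For positive definite `A, B` and any unitarily invariant norm `N`,
`N((A+B)⁻¹)⁻¹ ≥ N(A⁻¹)⁻¹ + N(B⁻¹)⁻¹`. -/
theorem stmt11 {n : ℕ} (N : Matrix (Fin n) (Fin n) ℂ → ℝ)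
    (htri : ∀ X Y, N (X + Y) ≤ N X + N Y)
    (hsmul : ∀ (c : ℂ) X, N (c • X) = ‖c‖ * N X)
    (hdef : ∀ X, N X = 0 ↔ X = 0)
    (hinv : ∀ X, ∀ U ∈ Matrix.unitaryGroup (Fin n) ℂ, ∀ V ∈ Matrix.unitaryGroup (Fin n) ℂ,
      N (U * X * V) = N X)
    (A B : Matrix (Fin n) (Fin n) ℂ) (hA : A.PosDef) (hB : B.PosDef) :
    (N A⁻¹)⁻¹ + (N B⁻¹)⁻¹ ≤ (N (A + B)⁻¹)⁻¹ := by
  simp only [Matrix.nonsing_inv_eq_ringInverse]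
  open scoped Matrix.Norms.L2Operator MatrixOrder in
  exact Seminorm.IsUnitarilyInvariant.inv_add_inv_le_inv_map_ringInverse_add
      (N := Seminorm.of N htri hsmul) hinv (fun X => (hdef X).mp)
      hA.isStrictlyPositive hB.isStrictlyPositive
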